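/- Let X be a compact metric space with a continuous flow φ_s, and let J : X → ℝ be continuous and strictly decreasing along non-constant flow lines. Suppose a < b are regular values (J^{-1}({a,b}) contains no rest points, and every flow line starting in J^{-1}(b) reaches J^{-1}(a) in finite time) and J^{-1}([a,b]) contains no rest points of the flow. Then there is a reparametrized function J̃ : J^{-1}([a,b]) → ℝ with the same level-set topology, agreeing with prescribed values, whose flow lines coincide with those of φ; in particular J^{-1}(b) and J^{-1}(a) are homeomorphic via the flow. -/

import Mathlib

/-!
Take `J' = J`. Through the band `J⁻¹([a,b])`, `J` is strictly decreasing along flow lines, so the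
time at which a point of one level reaches the other is unique; it depends continuously on the
point because crossing a level before or after a given time is an open condition. Points of
level `a` do reach level `b` backwards, by compactness: otherwise `J` would increase to a limit
`c ∈ [a,b]` along the backward orbit, and `J` would be constant along the flow line through an
`α`-limit point, a rest point in the band.
-/

open Filter Topology

namespace Flow

variable {X : Type*} [TopologicalSpace X] (φ : Flow ℝ X) {J : X → ℝ}

theorem apply_apply_eq_self_of_injective {x : X} {s t : ℝ}
    (hinj : Function.Injective fun u => J (φ u x)) (h : J (φ s (φ t x)) = J x) :
    φ s (φ t x) = x := by
  rw [← map_add] at h ⊢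
  rw [hinj (a₁ := s + t) (a₂ := 0) (by simpa only [map_zero_apply] using h), map_zero_apply]

theorem continuous_hittingTime (hJ : Continuous J) {p : X → Prop}
    (hanti : ∀ x : Subtype p, StrictAnti fun t => J (φ t x)) {d : ℝ} {τ : Subtype p → ℝ}
    (hτ : ∀ x, J (φ (τ x) x) = d) : Continuous τ := by
  have hJφ (t : ℝ) : Continuous fun x : Subtype p => J (φ t x) :=
    hJ.comp ((φ.continuous_toFun t).comp continuous_subtype_val)
  refine continuous_iff_continuousAt.2 fun x₀ => tendsto_order.2 ⟨fun l hl => ?_, fun u hu => ?_⟩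
  · have hlevel : d < J (φ l x₀) := hτ x₀ ▸ (hanti x₀).lt_iff_gt.2 hl
    filter_upwards [(hJφ l).continuousAt.eventually_const_lt hlevel] with x hx
    exact (hanti x).lt_iff_gt.1 (hτ x ▸ hx)
  · have hlevel : J (φ u x₀) < d := hτ x₀ ▸ (hanti x₀).lt_iff_gt.2 hu
    filter_upwards [(hJφ u).continuousAt.eventually_lt_const hlevel] with x hx
    exact (hanti x).lt_iff_gt.1 (hτ x ▸ hx)

theorem exists_continuous_hittingTime (hJ : Continuous J) {p : X → Prop}
    (hanti : ∀ x : Subtype p, StrictAnti fun t => J (φ t x)) {d : ℝ}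
    (hreach : ∀ x : Subtype p, ∃ t, J (φ t x) = d) :
    ∃ τ : Subtype p → ℝ, Continuous τ ∧ ∀ x, J (φ (τ x) x) = d := by
  choose τ hτ using hreach
  exact ⟨τ, φ.continuous_hittingTime hJ hanti hτ, hτ⟩

theorem exists_homeomorph_levelSets (hJ : Continuous J) {c d : ℝ}
    (hc : ∀ x, J x = c → StrictAnti fun t => J (φ t x))
    (hd : ∀ x, J x = d → StrictAnti fun t => J (φ t x))
    (hcd : ∀ x, J x = c → ∃ t, J (φ t x) = d) (hdc : ∀ x, J x = d → ∃ t, J (φ t x) = c) :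
    ∃ h : {x // J x = c} ≃ₜ {x // J x = d}, ∀ x, ∃ t, (h x : X) = φ t x := by
  obtain ⟨τ, hτ_cont, hτ⟩ :=
    φ.exists_continuous_hittingTime (p := (J · = c)) hJ (fun x => hc x x.2) (fun x => hcd x x.2)
  obtain ⟨σ, hσ_cont, hσ⟩ :=
    φ.exists_continuous_hittingTime (p := (J · = d)) hJ (fun x => hd x x.2) (fun x => hdc x x.2)
  refine ⟨
    { toFun := fun x => ⟨φ (τ x) x, hτ x⟩
      invFun := fun y => ⟨φ (σ y) y, hσ y⟩
      left_inv := fun x => Subtype.ext <|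
        φ.apply_apply_eq_self_of_injective (hc x x.2).injective ((hσ _).trans x.2.symm)
      right_inv := fun y => Subtype.ext <|
        φ.apply_apply_eq_self_of_injective (hd y y.2).injective ((hτ _).trans y.2.symm)
      continuous_toFun := (φ.continuous hτ_cont continuous_subtype_val).subtype_mk _
      continuous_invFun := (φ.continuous hσ_cont continuous_subtype_val).subtype_mk _ },
    fun x => ⟨τ x, rfl⟩⟩

theorem exists_forall_apply_eq_of_tendsto_atBot [CompactSpace X] (hJ : Continuous J) {y : X}
    {c : ℝ} (hlim : Tendsto (fun s => J (φ s y)) atBot (𝓝 c)) : ∃ z, ∀ t, J (φ t z) = c := by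
  obtain ⟨z, -, hz⟩ := isCompact_univ.exists_mapClusterPt (f := atBot) (u := fun s => φ s y)
    (by simp)
  refine ⟨z, fun t => ?_⟩
  have hcluster : MapClusterPt (J (φ t z)) atBot fun s => J (φ (t + s) y) := by
    simpa only [Function.comp_def, map_add] using
      hz.continuousAt_comp (hJ.comp (φ.continuous_toFun t)).continuousAt
  have hshift : Tendsto (fun s => J (φ (t + s) y)) atBot (𝓝 c) :=
    hlim.comp (tendsto_atBot_add_const_left _ t tendsto_id)
  by_contra hne
  exact (ClusterPt.mono hcluster hshift).ne (disjoint_nhds_nhds.2 hne).eq_bot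

theorem exists_apply_eq_of_mem_Icc [CompactSpace X] (hJ : Continuous J) {a b : ℝ}
    (hanti : ∀ x, J x ∈ Set.Icc a b → StrictAnti fun t => J (φ t x)) {y : X}
    (hy : J y ∈ Set.Icc a b) : ∃ s, J (φ s y) = b := by
  set g : ℝ → ℝ := fun s => J (φ s y)
  have hg_cont : Continuous g := hJ.comp (φ.continuous continuous_id continuous_const)
  have hg0 : g 0 = J y := congrArg J (φ.map_zero_apply y)
  by_cases hup : ∃ s ≤ 0, b ≤ g s
  · obtain ⟨s, hs, hbs⟩ := hup
    obtain ⟨r, -, hr⟩ := intermediate_value_Icc' hs hg_cont.continuousOn ⟨hg0 ▸ hy.2, hbs⟩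
    exact ⟨r, hr⟩
  push Not at hup
  have hg_anti : Antitone g := (hanti y hy).antitone
  have hg_le : ∀ s, g s ≤ b := fun s => (le_total s 0).elim (fun hs => (hup s hs).le)
    fun hs => (hg_anti hs).trans (hg0 ▸ hy.2)
  have hbdd : BddAbove (Set.range g) := ⟨b, Set.forall_mem_range.2 hg_le⟩
  obtain ⟨z, hz⟩ := φ.exists_forall_apply_eq_of_tendsto_atBot hJ (tendsto_atBot_ciSup hg_anti hbdd)
  have hsup_mem : ⨆ s, g s ∈ Set.Icc a b := ⟨hy.1.trans (hg0 ▸ le_ciSup hbdd 0), ciSup_le hg_le⟩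
  have hz_anti := hanti z (by rw [← φ.map_zero_apply z, hz 0]; exact hsup_mem)
  simpa only [hz, lt_self_iff_false] using hz_anti zero_lt_one

end Flow

/-- Milnor-style reparametrization: if `J` is strictly decreasing along the (non-rest)
flow lines of `φ`, the band `J⁻¹([a,b])` contains no rest points, and every point of the
level `b` flows down to the level `a` in finite time, then there is a reparametrized
function `J'` with the prescribed values `b` and `a` on the two levels, still strictly
decreasing along the flow lines of `φ` inside the band (so its flow lines coincide with
those of `φ` and the level-set topology is unchanged); in particular the two levels
`J⁻¹(b)` and `J⁻¹(a)` are homeomorphic via the flow. -/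
theorem stmt12 (X : Type) [MetricSpace X] [CompactSpace X]
    (φ : Flow ℝ X) (J : X → ℝ) (hJ : Continuous J)
    (hdec : ∀ x : X, ¬(∀ t, φ t x = x) → StrictAnti fun t => J (φ t x))
    (a b : ℝ) (hab : a < b)
    (hnorest : ∀ x, J x ∈ Set.Icc a b → ¬(∀ t, φ t x = x))
    (hreach : ∀ x, J x = b → ∃ t ≥ (0:ℝ), J (φ t x) = a) :
    (∃ J' : X → ℝ, Continuous J' ∧
        (∀ x, J x = b → J' x = b) ∧ (∀ x, J x = a → J' x = a) ∧
        (∀ (x : X) (s t : ℝ), s < t → J (φ s x) ∈ Set.Icc a b →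
          J (φ t x) ∈ Set.Icc a b → J' (φ t x) < J' (φ s x))) ∧
      ∃ h : {x : X // J x = b} ≃ₜ {x : X // J x = a},
        ∀ x : {x : X // J x = b}, ∃ t ≥ (0:ℝ), ((h x : X) = φ t (x : X)) := by
  have hanti : ∀ x, J x ∈ Set.Icc a b → StrictAnti fun t => J (φ t x) :=
    fun x hx => hdec x (hnorest x hx)
  have hb_mem : ∀ x, J x = b → J x ∈ Set.Icc a b := fun x hx => by rw [hx]; exact ⟨hab.le, le_rfl⟩
  have ha_mem : ∀ x, J x = a → J x ∈ Set.Icc a b := fun x hx => by rw [hx]; exact ⟨le_rfl, hab.le⟩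
  refine ⟨⟨J, hJ, fun _ h => h, fun _ h => h, fun x s t hst hs _ => ?_⟩, ?_⟩
  · simpa only [← Flow.map_add, sub_add_cancel, zero_add, Flow.map_zero_apply] using
      hanti _ hs (sub_pos.2 hst)
  obtain ⟨h, hh⟩ := φ.exists_homeomorph_levelSets hJ (fun x hx => hanti x (hb_mem x hx))
    (fun x hx => hanti x (ha_mem x hx)) (fun x hx => (hreach x hx).imp fun _ => And.right)
    (fun y hy => φ.exists_apply_eq_of_mem_Icc hJ hanti (ha_mem y hy))
  refine ⟨h, fun x => ?_⟩
  obtain ⟨t, ht⟩ := hh x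
  have hdown : J (φ t x) < J (φ 0 x) := by rw [← ht, (h x).2, Flow.map_zero_apply, x.2]; exact hab
  exact ⟨t, ((hanti x (hb_mem x x.2)).lt_iff_gt.1 hdown).le, ht⟩
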